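/- arXiv:2408.00250 — 2 statements merged into one kernel-verified Lean document; each statement's English description precedes it below -/
import Mathlib

section
/- Let d ≥ 3 be an integer. There exists a constant C > 0 depending only on d such that the following holds: for every algebraic unit α of degree d that is not a root of unity, with H the height of its minimal polynomial, if there exists an integer m with 0 < m < d−1 such that |α_m| ≤ 1 and 0 < |α_m| − |α_{d−1}| < |α_0|^{−1/(d−1)}, then |α_m| < 2·|α_0|^{−1/(d−1)} and |α_m| ≤ C·H^{−1/(m(d−1))}. -/
/-!
Write `A = |α_0|` and `n = d - 1`. Since `α` is a unit, the moduli of its conjugates multiply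
to `1`; as they are sorted, this forces `A ≥ 1` and `|α_n|^n · A ≤ 1`, so
`|α_n| ≤ A^(-1/n)` and the first claim follows from the gap hypothesis. For the second, the
height is at most `2^d` times the Mahler measure `∏ max(1, |α_i|)`, which is at most `A^m`
because `|α_i| ≤ |α_m| ≤ 1` for `i ≥ m`. Hence `H^(1/(mn)) ≤ 2^d A^(1/n)`, i.e.
`A^(-1/n) ≤ 2^d H^(-1/(mn))`.
-/

/-- The height of an integer polynomial: maximum absolute value of its coefficients. -/
def polyHeight (p : Polynomial ℤ) : ℕ :=
  p.support.sup fun i => (p.coeff i).natAbs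

/-- `r 0, …, r (d-1)` is a listing of the roots (with multiplicity) of `q`,
sorted so that the absolute values are non-increasing. -/
def SortedRoots (d : ℕ) (q : Polynomial ℂ) (r : ℕ → ℂ) : Prop :=
  q.roots = (Multiset.range d).map r ∧
    ∀ i j : ℕ, i ≤ j → j < d → ‖r j‖ ≤ ‖r i‖

open Polynomial Finset

section AntitoneProducts

variable {x : ℕ → ℝ} {d : ℕ}

theorem one_le_of_antitoneOn_of_prod_eq_one (hx : AntitoneOn x (Set.Iio d))
    (hx0 : ∀ i, 0 ≤ x i) (hd : d ≠ 0) (hprod : ∏ i ∈ range d, x i = 1) : 1 ≤ x 0 := by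
  have hpow : 1 ≤ x 0 ^ d := by
    calc 1 = ∏ i ∈ range d, x i := hprod.symm
      _ ≤ ∏ _i ∈ range d, x 0 :=
        prod_le_prod (fun i _ => hx0 i) fun i hi =>
          hx (Set.mem_Iio.mpr (by omega)) (mem_range.mp hi) (Nat.zero_le i)
      _ = x 0 ^ d := by rw [prod_const, card_range]
  exact (one_le_pow_iff_of_nonneg (hx0 0) hd).mp hpow

theorem pow_mul_le_prod_of_antitoneOn {n : ℕ} (hx : AntitoneOn x (Set.Iio (n + 1)))
    (hx0 : ∀ i, 0 ≤ x i) : x n ^ n * x 0 ≤ ∏ i ∈ range (n + 1), x i := by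
  rw [prod_range_succ']
  refine mul_le_mul_of_nonneg_right ?_ (hx0 0)
  calc x n ^ n = ∏ _i ∈ range n, x n := by rw [prod_const, card_range]
    _ ≤ ∏ i ∈ range n, x (i + 1) :=
      prod_le_prod (fun _ _ => hx0 n) fun i hi => by
        have := mem_range.mp hi
        exact hx (Set.mem_Iio.mpr (by omega)) (Set.mem_Iio.mpr (by omega)) (by omega)

theorem prod_max_one_le_pow_of_antitoneOn {m : ℕ} (hx : AntitoneOn x (Set.Iio d))
    (hm : m < d) (hxm : x m ≤ 1) (hx0 : 1 ≤ x 0) :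
    ∏ i ∈ range d, max 1 (x i) ≤ x 0 ^ m := by
  rw [← prod_range_mul_prod_Ico _ hm.le]
  have htail : ∏ i ∈ Ico m d, max 1 (x i) = 1 :=
    prod_eq_one fun i hi => by
      have := mem_Ico.mp hi
      exact max_eq_left ((hx hm (Set.mem_Iio.mpr (by omega)) this.1).trans hxm)
  have hhead : ∏ i ∈ range m, max 1 (x i) ≤ x 0 ^ m := by
    calc ∏ i ∈ range m, max 1 (x i) ≤ ∏ _i ∈ range m, x 0 :=
          prod_le_prod (fun i _ => zero_le_one.trans (le_max_left _ _)) fun i hi =>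
            max_le hx0 <|
              hx (Set.mem_Iio.mpr (by omega)) ((mem_range.mp hi).trans hm) (Nat.zero_le i)
      _ = x 0 ^ m := by rw [prod_const, card_range]
  rw [htail, mul_one]
  exact hhead

end AntitoneProducts

theorem le_rpow_neg_inv_of_pow_mul_le_one {a b : ℝ} {n : ℕ} (ha : 0 ≤ a) (hb : 0 < b)
    (hn : n ≠ 0) (h : a ^ n * b ≤ 1) : a ≤ b ^ (-(1 / (n : ℝ))) := by
  rw [Real.rpow_neg hb.le, ← Real.inv_rpow hb.le, one_div,
    Real.le_rpow_inv_iff_of_pos ha (inv_nonneg.mpr hb.le) (by positivity), Real.rpow_natCast,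
    ← one_div, le_div_iff₀ hb]
  exact h

theorem rpow_neg_inv_le_of_le_mul_pow {A H c n : ℝ} {m : ℕ} (hA : 0 < A) (hH : 0 < H)
    (hc : 1 ≤ c) (hm : 1 ≤ m) (hn : 1 ≤ n) (h : H ≤ c * A ^ m) :
    A ^ (-(1 / n)) ≤ c * H ^ (-(1 / (m * n))) := by
  have hm' : (1 : ℝ) ≤ m := by exact_mod_cast hm
  have he : 1 / ((m : ℝ) * n) ≤ 1 := (div_le_one (by positivity)).mpr (by nlinarith)
  have hroot : H ^ (1 / ((m : ℝ) * n)) ≤ c * A ^ (1 / n) := by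
    calc H ^ (1 / ((m : ℝ) * n)) ≤ (c * A ^ m) ^ (1 / ((m : ℝ) * n)) := by gcongr
      _ = c ^ (1 / ((m : ℝ) * n)) * A ^ (1 / n) := by
        rw [Real.mul_rpow (by positivity) (by positivity), ← Real.rpow_natCast,
          ← Real.rpow_mul hA.le]
        congr 2
        field_simp
      _ ≤ c * A ^ (1 / n) := by
        gcongr
        exact Real.rpow_le_self_of_one_le hc he
  have hHe : 0 < H ^ (1 / ((m : ℝ) * n)) := by positivity
  have hAs : 0 < A ^ (1 / n) := by positivity
  rw [Real.rpow_neg hA.le, Real.rpow_neg hH.le, ← div_eq_mul_inv, le_div_iff₀ hHe,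
    inv_mul_le_iff₀ hAs]
  exact hroot.trans_eq (mul_comm _ _)

theorem prod_range_norm_eq_one_of_roots_eq {p : ℤ[X]} {d : ℕ} {r : ℕ → ℂ} (hp : p.Monic)
    (hunit : IsUnit (p.coeff 0))
    (hr : (p.map (Int.castRingHom ℂ)).roots = (Multiset.range d).map r) :
    ∏ i ∈ range d, ‖r i‖ = 1 := by
  have hcoeff :=
    (IsAlgClosed.splits (p.map (Int.castRingHom ℂ))).coeff_zero_eq_prod_roots_of_monic (hp.map _)
  rw [hr, coeff_map, eq_intCast] at hcoeff
  have := congrArg norm hcoeff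
  rw [Complex.norm_intCast, ← Int.cast_abs, Int.isUnit_iff_abs_eq.mp hunit, norm_mul, norm_pow,
    norm_neg, norm_one, one_pow, one_mul, ← range_val, ← prod_eq_multiset_prod, norm_prod,
    Int.cast_one] at this
  exact this.symm

theorem mahlerMeasure_eq_prod_max_one_of_roots_eq {q : ℂ[X]} {d : ℕ} {r : ℕ → ℂ} (hq : q.Monic)
    (hr : q.roots = (Multiset.range d).map r) :
    q.mahlerMeasure = ∏ i ∈ range d, max 1 ‖r i‖ := by
  rw [mahlerMeasure_eq_leadingCoeff_mul_prod_roots, hq.leadingCoeff, norm_one, one_mul, hr,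
    Multiset.map_map, prod_eq_multiset_prod, range_val]
  rfl

theorem polyHeight_le_supNorm (p : ℤ[X]) :
    (polyHeight p : ℝ) ≤ (p.map (Int.castRingHom ℂ)).supNorm := by
  have : polyHeight p ≤ ⌊(p.map (Int.castRingHom ℂ)).supNorm⌋₊ :=
    Finset.sup_le fun i _ => Nat.le_floor <| by
      simpa [Complex.norm_intCast, Nat.cast_natAbs] using (p.map (Int.castRingHom ℂ)).le_supNorm i
  exact (Nat.cast_le.mpr this).trans (Nat.floor_le (supNorm_nonneg _))

theorem polyHeight_le_two_pow_mul_mahlerMeasure (p : ℤ[X]) :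
    (polyHeight p : ℝ) ≤ 2 ^ p.natDegree * (p.map (Int.castRingHom ℂ)).mahlerMeasure := by
  calc (polyHeight p : ℝ) ≤ (p.map (Int.castRingHom ℂ)).supNorm := polyHeight_le_supNorm p
    _ ≤ _ := supNorm_le_choose_natDegree_div_two_mul_mahlerMeasure _
    _ ≤ 2 ^ p.natDegree * (p.map (Int.castRingHom ℂ)).mahlerMeasure := by
      rw [natDegree_map_eq_of_injective Int.cast_injective]
      gcongr
      · exact mahlerMeasure_nonneg _
      · exact_mod_cast Nat.choose_le_two_pow _ _

theorem Polynomial.Monic.one_le_polyHeight {p : ℤ[X]} (hp : p.Monic) : 1 ≤ polyHeight p := by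
  have := Finset.le_sup (f := fun i => (p.coeff i).natAbs)
    (natDegree_mem_support_of_nonzero hp.ne_zero)
  rwa [hp.coeff_natDegree, Int.natAbs_one] at this

theorem SortedRoots.antitoneOn {d : ℕ} {q : ℂ[X]} {r : ℕ → ℂ} (h : SortedRoots d q r) :
    AntitoneOn (‖r ·‖) (Set.Iio d) :=
  fun i _ j hj hij => h.2 i j hij hj

theorem polyHeight_le_two_pow_mul_pow_of_sortedRoots {p : ℤ[X]} {d m : ℕ} {r : ℕ → ℂ}
    (hp : p.Monic) (hdeg : p.natDegree = d) (hr : SortedRoots d (p.map (Int.castRingHom ℂ)) r)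
    (hm : m < d) (hrm : ‖r m‖ ≤ 1) (hr0 : 1 ≤ ‖r 0‖) :
    (polyHeight p : ℝ) ≤ 2 ^ d * ‖r 0‖ ^ m :=
  calc (polyHeight p : ℝ) ≤ 2 ^ p.natDegree * (p.map (Int.castRingHom ℂ)).mahlerMeasure :=
        polyHeight_le_two_pow_mul_mahlerMeasure p
    _ = 2 ^ d * ∏ i ∈ range d, max 1 ‖r i‖ := by
        rw [hdeg, mahlerMeasure_eq_prod_max_one_of_roots_eq (hp.map _) hr.1]
    _ ≤ 2 ^ d * ‖r 0‖ ^ m := by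
        gcongr
        exact prod_max_one_le_pow_of_antitoneOn hr.antitoneOn hm hrm hr0

theorem lemma_adapt_b_general (d : ℕ) :
    ∃ C : ℝ, 0 < C ∧
      ∀ (p : Polynomial ℤ) (α : ℂ) (r : ℕ → ℂ) (m : ℕ),
        p.Monic → Irreducible p → p.natDegree = d →
        Polynomial.aeval α p = 0 →
        (p.coeff 0 = 1 ∨ p.coeff 0 = -1) →
        (∀ n : ℕ, 0 < n → α ^ n ≠ 1) →
        SortedRoots d (p.map (Int.castRingHom ℂ)) r →
        0 < m → m < d - 1 →
        ‖r m‖ ≤ 1 →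
        0 < ‖r m‖ - ‖r (d - 1)‖ →
        ‖r m‖ - ‖r (d - 1)‖
            < ‖r 0‖ ^ (-(1 / ((d : ℝ) - 1))) →
        ‖r m‖ < 2 * ‖r 0‖ ^ (-(1 / ((d : ℝ) - 1))) ∧
        ‖r m‖ ≤ C * (polyHeight p : ℝ) ^ (-(1 / ((m : ℝ) * ((d : ℝ) - 1)))) := by
  refine ⟨2 ^ (d + 1), by positivity, ?_⟩
  intro p _ r m hp _ hdeg _ hunit _ hr hm0 hmd hrm1 _ hgap
  obtain ⟨n, rfl⟩ : ∃ n, d = n + 1 := ⟨d - 1, by omega⟩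
  have hcast : ((n + 1 : ℕ) : ℝ) - 1 = n := by push_cast; ring
  rw [Nat.add_sub_cancel] at hmd hgap
  rw [hcast] at hgap ⊢
  have hprod := prod_range_norm_eq_one_of_roots_eq hp (Int.isUnit_iff.mpr hunit) hr.1
  have hr0 : 1 ≤ ‖r 0‖ :=
    one_le_of_antitoneOn_of_prod_eq_one hr.antitoneOn (fun _ => norm_nonneg _) n.succ_ne_zero hprod
  have hlast : ‖r n‖ ≤ ‖r 0‖ ^ (-(1 / (n : ℝ))) :=
    le_rpow_neg_inv_of_pow_mul_le_one (norm_nonneg _) (by positivity) (by omega)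
      (hprod ▸ pow_mul_le_prod_of_antitoneOn hr.antitoneOn fun _ => norm_nonneg _)
  have hfirst : ‖r m‖ < 2 * ‖r 0‖ ^ (-(1 / (n : ℝ))) := by linarith
  refine ⟨hfirst, ?_⟩
  calc ‖r m‖ ≤ 2 * ‖r 0‖ ^ (-(1 / (n : ℝ))) := hfirst.le
    _ ≤ 2 * (2 ^ (n + 1) * (polyHeight p : ℝ) ^ (-(1 / ((m : ℝ) * n)))) := by
        gcongr
        exact rpow_neg_inv_le_of_le_mul_pow (by positivity) (mod_cast hp.one_le_polyHeight)
          (one_le_pow₀ one_le_two) hm0 (mod_cast (show 1 ≤ n by omega))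
          (polyHeight_le_two_pow_mul_pow_of_sortedRoots hp hdeg hr (by omega) hrm1 hr0)
    _ = 2 ^ (n + 1 + 1) * (polyHeight p : ℝ) ^ (-(1 / ((m : ℝ) * n))) := by ring

/-- For `d ≥ 3` there is `C > 0` depending only on `d` such that:
for every algebraic unit `α` of degree `d` that is not a root of unity, with `H` the
height of its minimal polynomial, if `0 < m < d-1` satisfies `|α_m| ≤ 1` and
`0 < |α_m| - |α_{d-1}| < |α_0|^{-1/(d-1)}`, then `|α_m| < 2 |α_0|^{-1/(d-1)}` and
`|α_m| ≤ C H^{-1/(m(d-1))}`. -/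
theorem lemma_adapt_b (d : ℕ) (hd : 3 ≤ d) :
    ∃ C : ℝ, 0 < C ∧
      ∀ (p : Polynomial ℤ) (α : ℂ) (r : ℕ → ℂ) (m : ℕ),
        p.Monic → Irreducible p → p.natDegree = d →
        Polynomial.aeval α p = 0 →
        (p.coeff 0 = 1 ∨ p.coeff 0 = -1) →
        (∀ n : ℕ, 0 < n → α ^ n ≠ 1) →
        SortedRoots d (p.map (Int.castRingHom ℂ)) r →
        0 < m → m < d - 1 →
        ‖r m‖ ≤ 1 →
        0 < ‖r m‖ - ‖r (d - 1)‖ →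
        ‖r m‖ - ‖r (d - 1)‖
            < ‖r 0‖ ^ (-(1 / ((d : ℝ) - 1))) →
        ‖r m‖ < 2 * ‖r 0‖ ^ (-(1 / ((d : ℝ) - 1))) ∧
        ‖r m‖ ≤ C * (polyHeight p : ℝ) ^ (-(1 / ((m : ℝ) * ((d : ℝ) - 1)))) :=
  lemma_adapt_b_general d
end

section
/- For every integer d ≥ 2, the set E_{1,d} equals the closed interval [0, d−1]; and for every integer d ≥ 3, the set E_{2,d} equals the convex hull in ℝ^2 of the four points (0,0), (d−1, 0), (1, d−2), and (0, (d−2)/2). -/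
/-- The set `E_{k,d}`: tuples `(c_1,…,c_k)` of nonnegative reals (here `c i` plays the
role of `c_{i+1}`) such that `|α_0| |α_1|^{c_1} ⋯ |α_k|^{c_k} ≥ 1` for every algebraic
integer `α` of degree `d`, i.e. for every sorted listing of the roots of every monic
irreducible integer polynomial of degree `d`. -/
def Ekd (k d : ℕ) : Set (Fin k → ℝ) :=
  {c | (∀ i, 0 ≤ c i) ∧
    ∀ (p : Polynomial ℤ) (r : ℕ → ℂ),
      p.Monic → Irreducible p → p.natDegree = d →
      SortedRoots d (p.map (Int.castRingHom ℂ)) r →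
      1 ≤ ‖r 0‖ * ∏ i : Fin k, ‖r (i.1 + 1)‖ ^ c i}

open Polynomial Finset

theorem exists_sortedRoots (q : ℂ[X]) : ∃ r, SortedRoots q.natDegree q r := by
  let L := q.roots.toList.mergeSort fun x y => decide (‖y‖ ≤ ‖x‖)
  have hperm : L.Perm q.roots.toList := List.mergeSort_perm _ _
  have hlen : L.length = q.natDegree := by
    rw [hperm.length_eq, Multiset.length_toList, IsAlgClosed.card_roots_eq_natDegree]
  have hsorted : L.Pairwise fun x y => ‖y‖ ≤ ‖x‖ := by
    simpa using List.pairwise_mergeSort (le := fun x y : ℂ => decide (‖y‖ ≤ ‖x‖))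
      (by simp only [decide_eq_true_eq]; exact fun _ _ _ h₁ h₂ => h₂.trans h₁)
      (by simpa using fun a b => le_total ‖b‖ ‖a‖) q.roots.toList
  refine ⟨fun i => L.getD i 0, ?_, fun i j hij hj => ?_⟩
  · have hL : (List.range L.length).map (fun i => L.getD i 0) = L :=
      List.ext_getElem (by simp) fun i _ h => by simp [List.getElem?_eq_getElem h]
    rw [← Multiset.coe_toList q.roots, ← Multiset.coe_eq_coe.2 hperm, ← hlen]
    conv_lhs => rw [← hL]
    rfl
  · rcases hij.eq_or_lt with rfl | hij
    · rfl
    · simp only [List.getD_eq_getElem _ _ (hlen ▸ hj),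
        List.getD_eq_getElem _ _ (hlen ▸ hij.trans hj)]
      exact List.pairwise_iff_getElem.1 hsorted i j _ _ hij

namespace SortedRoots

variable {d : ℕ} {r : ℕ → ℂ}

theorem mem_roots {q : ℂ[X]} (hr : SortedRoots d q r) {i : ℕ} (hi : i < d) : r i ∈ q.roots :=
  hr.1 ▸ Multiset.mem_map_of_mem r (Multiset.mem_range.2 hi)

theorem prod_norm {q : ℂ[X]} (hq : q.Monic) (hr : SortedRoots d q r) :
    ∏ i ∈ range d, ‖r i‖ = ‖q.coeff 0‖ := by
  rw [(IsAlgClosed.splits q).coeff_zero_eq_prod_roots_of_monic hq, hr.1, norm_mul, norm_pow,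
    norm_neg, norm_one, one_pow, one_mul, ← norm_prod]
  rfl

variable {p : ℤ[X]} (hp : p.Monic) (h0 : p.coeff 0 ≠ 0)
  (hr : SortedRoots d (p.map (Int.castRingHom ℂ)) r)
include hp h0 hr

theorem one_le_prod_norm : 1 ≤ ∏ i ∈ range d, ‖r i‖ := by
  rw [hr.prod_norm (hp.map _), coeff_map, eq_intCast, Complex.norm_intCast]
  exact_mod_cast Int.one_le_abs h0

theorem norm_pos {i : ℕ} (hi : i < d) : 0 < ‖r i‖ :=
  (norm_nonneg _).lt_of_ne' <| (prod_ne_zero_iff.1 <|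
    (zero_lt_one.trans_le (hr.one_le_prod_norm hp h0)).ne') i (mem_range.2 hi)

theorem one_le_prod_norm_mul_pow {n : ℕ} (hn : n < d) :
    1 ≤ (∏ i ∈ range n, ‖r i‖) * ‖r n‖ ^ (d - n) := by
  calc 1 ≤ ∏ i ∈ range d, ‖r i‖ := hr.one_le_prod_norm hp h0
    _ = (∏ i ∈ range n, ‖r i‖) * ∏ i ∈ range (d - n), ‖r (n + i)‖ := by
      rw [← prod_range_add, Nat.add_sub_cancel' hn.le]
    _ ≤ (∏ i ∈ range n, ‖r i‖) * ‖r n‖ ^ (d - n) := by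
      gcongr
      refine (prod_le_prod (fun _ _ => norm_nonneg _) fun i hi => ?_).trans_eq
        (by rw [prod_const, card_range])
      exact hr.2 n (n + i) (Nat.le_add_right n i) (by grind)

theorem one_le_norm_zero (hd : 0 < d) : 1 ≤ ‖r 0‖ := by
  have := hr.one_le_prod_norm_mul_pow hp h0 hd
  rw [prod_range_zero, one_mul, Nat.sub_zero] at this
  exact (one_le_pow_iff_of_nonneg (norm_nonneg _) hd.ne').1 this

theorem one_le_norm_mul_rpow (hd : 2 ≤ d) : 1 ≤ ‖r 0‖ * ‖r 1‖ ^ ((d : ℝ) - 1) := by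
  have := hr.one_le_prod_norm_mul_pow hp h0 (n := 1) (by omega)
  rwa [prod_range_one, ← Real.rpow_natCast, Nat.cast_sub (by omega), Nat.cast_one] at this

theorem one_le_norm_mul_norm_mul_rpow (hd : 3 ≤ d) :
    1 ≤ ‖r 0‖ * ‖r 1‖ * ‖r 2‖ ^ ((d : ℝ) - 2) := by
  have := hr.one_le_prod_norm_mul_pow hp h0 (n := 2) (by omega)
  rwa [prod_range_succ, prod_range_one, ← Real.rpow_natCast, Nat.cast_sub (by omega),
    Nat.cast_ofNat] at this

theorem one_le_norm_mul_rpow_half (hd : 3 ≤ d) : 1 ≤ ‖r 0‖ * ‖r 2‖ ^ (((d : ℝ) - 2) / 2) := by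
  have hsq : ‖r 0‖ * ‖r 1‖ * ‖r 2‖ ^ ((d : ℝ) - 2) ≤
      (‖r 0‖ * ‖r 2‖ ^ (((d : ℝ) - 2) / 2)) ^ 2 := by
    have h2 : (‖r 2‖ ^ (((d : ℝ) - 2) / 2)) ^ 2 = ‖r 2‖ ^ ((d : ℝ) - 2) := by
      rw [← Real.rpow_natCast, ← Real.rpow_mul (norm_nonneg _)]
      norm_num
    rw [mul_pow, h2, sq]
    gcongr
    exact hr.2 0 1 zero_le_one (by omega)
  exact (one_le_sq_iff₀ (by positivity)).1
    ((hr.one_le_norm_mul_norm_mul_rpow hp h0 hd).trans hsq)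

end SortedRoots

theorem Irreducible.coeff_zero_ne_zero {R : Type*} [CommRing R] [IsDomain R] {p : R[X]}
    (hirr : Irreducible p) (hdeg : p.natDegree ≠ 1) : p.coeff 0 ≠ 0 := fun h0 =>
  hdeg <| by
    rw [← degree_eq_iff_natDegree_eq_of_pos one_pos, ← degree_eq_degree_of_associated
      (irreducible_X.associated_of_dvd hirr (X_dvd_iff.2 h0)), degree_X, Nat.cast_one]

theorem one_le_mul_prod_rpow_iff {ι : Type*} [Fintype ι] {x : ℝ} {y c : ι → ℝ} (hx : 0 < x)
    (hy : ∀ i, 0 < y i) :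
    1 ≤ x * ∏ i, y i ^ c i ↔ 0 ≤ Real.log x + ∑ i, c i * Real.log (y i) := by
  have hprod : 0 < ∏ i, y i ^ c i := prod_pos fun i _ => Real.rpow_pos_of_pos (hy i) _
  rw [← Real.log_nonneg_iff (mul_pos hx hprod), Real.log_mul hx.ne' hprod.ne',
    Real.log_prod fun i _ => (Real.rpow_pos_of_pos (hy i) _).ne']
  simp only [Real.log_rpow (hy _)]

theorem convex_setOf_one_le_mul_prod_rpow {ι : Type*} [Fintype ι] {x : ℝ} {y : ι → ℝ}
    (hx : 0 < x) (hy : ∀ i, 0 < y i) : Convex ℝ {c : ι → ℝ | 1 ≤ x * ∏ i, y i ^ c i} := by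
  have hlin : IsLinearMap ℝ fun c : ι → ℝ => ∑ i, c i * Real.log (y i) :=
    ⟨fun c c' => by simp only [Pi.add_apply, add_mul, sum_add_distrib],
      fun a c => by simp only [Pi.smul_apply, smul_eq_mul, mul_sum, mul_assoc]⟩
  simp_rw [one_le_mul_prod_rpow_iff hx hy, ← neg_le_iff_add_nonneg']
  exact convex_halfSpace_ge hlin _

theorem mem_Ekd_of_coeff_zero_ne_zero {k d : ℕ} {c : Fin k → ℝ} (hd : d ≠ 1)
    (hc : ∀ i, 0 ≤ c i)
    (h : ∀ (p : ℤ[X]) (r : ℕ → ℂ), p.Monic → p.coeff 0 ≠ 0 →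
      SortedRoots d (p.map (Int.castRingHom ℂ)) r →
        1 ≤ ‖r 0‖ * ∏ i : Fin k, ‖r (i + 1)‖ ^ c i) :
    c ∈ Ekd k d :=
  ⟨hc, fun p r hp hirr hdeg hr => h p r hp (hirr.coeff_zero_ne_zero (hdeg ▸ hd)) hr⟩

theorem convex_Ekd {k d : ℕ} (hd : 2 ≤ d) (hkd : k < d) : Convex ℝ (Ekd k d) := by
  intro c hc c' hc' a b ha hb hab
  refine ⟨fun i => add_nonneg (mul_nonneg ha (hc.1 i)) (mul_nonneg hb (hc'.1 i)),
    fun p r hp hirr hdeg hr => ?_⟩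
  have h0 := hirr.coeff_zero_ne_zero (by omega)
  exact convex_setOf_one_le_mul_prod_rpow (hr.norm_pos hp h0 (by omega))
    (fun i => hr.norm_pos hp h0 (by omega)) (hc.2 p r hp hirr hdeg hr)
    (hc'.2 p r hp hirr hdeg hr) ha hb hab

theorem zero_mem_Ekd {k d : ℕ} (hd : 2 ≤ d) : 0 ∈ Ekd k d :=
  mem_Ekd_of_coeff_zero_ne_zero (by omega) (fun _ => le_rfl) fun p r hp h0 hr => by
    simpa using hr.one_le_norm_zero hp h0 (by omega)

theorem Convex.add_smul_mem_of_zero_mem {𝕜 E : Type*} [Field 𝕜] [LinearOrder 𝕜]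
    [IsStrictOrderedRing 𝕜] [AddCommGroup E] [Module 𝕜 E] {s : Set E} (hs : Convex 𝕜 s)
    (h0 : 0 ∈ s) {u v : E} (hu : u ∈ s) (hv : v ∈ s) {β γ : 𝕜} (hβ : 0 ≤ β) (hγ : 0 ≤ γ)
    (hβγ : β + γ ≤ 1) : β • u + γ • v ∈ s := by
  simpa [Fin.sum_univ_three] using hs.sum_mem (t := univ) (w := ![1 - β - γ, β, γ])
    (z := ![0, u, v]) (by simp [Fin.forall_fin_succ]; grind)
    (by simp [Fin.sum_univ_three]; ring) (by simp [Fin.forall_fin_succ, h0, hu, hv])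

theorem mem_convexHull_quadrilateral {D : ℝ} (hD : 2 < D) {c : Fin 2 → ℝ} (hc0 : 0 ≤ c 0)
    (hc1 : 0 ≤ c 1) (hsum : c 0 + c 1 ≤ D - 1) (hedge : 2 * c 1 ≤ (D - 2) * (c 0 + 1)) :
    c ∈ convexHull ℝ ({![0, 0], ![D - 1, 0], ![1, D - 2], ![0, (D - 2) / 2]} :
      Set (Fin 2 → ℝ)) := by
  set S : Set (Fin 2 → ℝ) := {![0, 0], ![D - 1, 0], ![1, D - 2], ![0, (D - 2) / 2]}
  have hS := convex_convexHull ℝ S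
  have hmem := subset_convexHull ℝ S
  have h0 : (0 : Fin 2 → ℝ) ∈ convexHull ℝ S := by
    convert hmem (Set.mem_insert _ _)
    ext i; fin_cases i <;> rfl
  have hD1 : 0 < D - 1 := by linarith
  have hD2 : 0 < D - 2 := by linarith
  -- the diagonal from `0` to `(1, D - 2)` cuts the quadrilateral into two triangles
  rcases le_or_gt (c 1) ((D - 2) * c 0) with h | h
  · convert hS.add_smul_mem_of_zero_mem h0 (u := ![D - 1, 0]) (v := ![1, D - 2])
      (hmem (by simp [S])) (hmem (by simp [S])) (β := (c 0 - c 1 / (D - 2)) / (D - 1))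
      (γ := c 1 / (D - 2)) ?_ ?_ ?_
    · ext i
      fin_cases i
      · simp
        field_simp
        ring
      · simp
        field_simp
    · exact div_nonneg (by rw [sub_nonneg, div_le_iff₀ hD2]; linarith) hD1.le
    · exact div_nonneg hc1 hD2.le
    · rw [show (c 0 - c 1 / (D - 2)) / (D - 1) + c 1 / (D - 2) = (c 0 + c 1) / (D - 1) by
        field_simp; ring, div_le_one hD1]
      exact hsum
  · convert hS.add_smul_mem_of_zero_mem h0 (u := ![1, D - 2]) (v := ![0, (D - 2) / 2])
      (hmem (by simp [S])) (hmem (by simp [S])) (β := c 0)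
      (γ := 2 * (c 1 - (D - 2) * c 0) / (D - 2)) ?_ ?_ ?_
    · ext i
      fin_cases i
      · simp
      · simp
        field_simp
        ring
    · exact hc0
    · exact div_nonneg (by linarith) hD2.le
    · rw [← sub_nonneg, show 1 - (c 0 + 2 * (c 1 - (D - 2) * c 0) / (D - 2)) =
        ((D - 2) * (c 0 + 1) - 2 * c 1) / (D - 2) by field_simp; ring]
      exact div_nonneg (by linarith) hD2.le

theorem convexHull_subset_Ekd_two {d : ℕ} (hd : 3 ≤ d) :
    convexHull ℝ ({![0, 0], ![(d : ℝ) - 1, 0], ![1, (d : ℝ) - 2], ![0, ((d : ℝ) - 2) / 2]} :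
      Set (Fin 2 → ℝ)) ⊆ Ekd 2 d := by
  have hd' : (3 : ℝ) ≤ d := by exact_mod_cast hd
  refine convexHull_min ?_ (convex_Ekd (by omega) (by omega))
  rintro v (rfl | rfl | rfl | rfl) <;>
    refine mem_Ekd_of_coeff_zero_ne_zero (by omega) ?_ fun p r hp h0 hr => ?_ <;>
    simp [Fin.forall_fin_two, Fin.prod_univ_two]
  · exact hr.one_le_norm_zero hp h0 (by omega)
  · linarith
  · exact hr.one_le_norm_mul_rpow hp h0 (by omega)
  · linarith
  · simpa [mul_assoc] using hr.one_le_norm_mul_norm_mul_rpow hp h0 hd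
  · linarith
  · exact hr.one_le_norm_mul_rpow_half hp h0 hd

theorem pow_mul_pow_le_of_prod_range_eq_one {f : ℕ → ℝ} {d j : ℕ} {P Q : ℝ} (hj : j ≤ d)
    (hP : 0 ≤ P) (hQ : 0 ≤ Q) (hf : ∏ i ∈ range d, f i = 1) (hfP : ∀ i < j, P ≤ f i)
    (hfQ : ∀ i, j ≤ i → i < d → Q ≤ f i) : P ^ j * Q ^ (d - j) ≤ 1 := by
  calc P ^ j * Q ^ (d - j) = (∏ _i ∈ range j, P) * ∏ _i ∈ range (d - j), Q := by simp
    _ ≤ (∏ i ∈ range j, f i) * ∏ i ∈ range (d - j), f (j + i) := by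
      gcongr with i hi i hi
      · exact prod_nonneg fun i hi => hP.trans (hfP i (mem_range.1 hi))
      · exact hfP i (mem_range.1 hi)
      · exact hfQ _ (by omega) (by grind)
    _ = 1 := by rw [← prod_range_add, Nat.add_sub_cancel' hj, hf]

/-- For large `|b|`, exactly `e` roots have modulus about `|b|^(1/e)` and the others modulus about
`|b|^(-1/m)`: these polynomials show that the inequalities cutting out `E_{k,d}` are sharp. -/
noncomputable def extremalPoly (m e : ℕ) (b : ℤ) : ℤ[X] := X ^ m * (X ^ e + C b) - 1

section ExtremalPoly

variable {m e : ℕ} {b : ℤ}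

theorem natDegree_X_pow_mul_X_pow_add_C (he : e ≠ 0) :
    (X ^ m * (X ^ e + C b)).natDegree = m + e := by
  rw [(monic_X_pow m).natDegree_mul (monic_X_pow_add_C b he), natDegree_X_pow,
    natDegree_X_pow_add_C]

theorem extremalPoly_monic (he : e ≠ 0) : (extremalPoly m e b).Monic := by
  refine ((monic_X_pow m).mul (monic_X_pow_add_C b he)).sub_of_left ?_
  rw [degree_one, ← natDegree_pos_iff_degree_pos, natDegree_X_pow_mul_X_pow_add_C he]
  omega

theorem extremalPoly_natDegree (he : e ≠ 0) : (extremalPoly m e b).natDegree = m + e := by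
  rw [extremalPoly, natDegree_sub_eq_left_of_natDegree_lt] <;>
    rw [natDegree_X_pow_mul_X_pow_add_C he]
  rw [natDegree_one]
  omega

theorem extremalPoly_coeff_zero (hm : m ≠ 0) : (extremalPoly m e b).coeff 0 = -1 := by
  simp [extremalPoly, coeff_X_pow, hm.symm]

theorem eq_one_of_mem_roots_extremalPoly {z : ℂ}
    (hz : z ∈ ((extremalPoly m e b).map (Int.castRingHom ℂ)).roots) :
    z ^ m * (z ^ e + b) = 1 := by
  simpa [extremalPoly, sub_eq_zero] using isRoot_of_mem_roots hz

theorem exists_sortedRoots_extremalPoly (he : e ≠ 0) :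
    ∃ r, SortedRoots (m + e) ((extremalPoly m e b).map (Int.castRingHom ℂ)) r := by
  simpa [(extremalPoly_monic he).natDegree_map, extremalPoly_natDegree he] using
    exists_sortedRoots ((extremalPoly m e b).map (Int.castRingHom ℂ))

end ExtremalPoly

section RootEstimates

variable {z b : ℂ} {m e : ℕ}

theorem norm_pow_mul_norm_add_eq_one (h : z ^ m * (z ^ e + b) = 1) :
    ‖z‖ ^ m * ‖z ^ e + b‖ = 1 := by
  simpa using congrArg norm h

theorem norm_pow_le_norm_add_one (h : z ^ m * (z ^ e + b) = 1) : ‖z‖ ^ e ≤ ‖b‖ + 1 := by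
  have hn := norm_pow_mul_norm_add_eq_one h
  have hw : ‖z‖ ^ e - ‖b‖ ≤ ‖z ^ e + b‖ := by
    simpa using norm_sub_norm_le (z ^ e) (-b)
  by_contra! hlt
  have hz : 1 ≤ ‖z‖ := by
    by_contra! hz
    linarith [pow_le_one₀ (norm_nonneg z) hz.le (n := e), norm_nonneg b]
  nlinarith [one_le_pow₀ hz (n := m)]

theorem norm_pow_le_inv_of_norm_pow_le (h : z ^ m * (z ^ e + b) = 1) (hm : m ≠ 0)
    (hb : 1 < ‖b‖) (hs : ‖z‖ ^ e ≤ ‖b‖ - 1) : ‖z‖ ^ m ≤ (‖b‖ - 1)⁻¹ := by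
  have hn := norm_pow_mul_norm_add_eq_one h
  have hw : ‖b‖ - ‖z‖ ^ e ≤ ‖z ^ e + b‖ := by
    simpa [add_comm] using norm_sub_norm_le b (-z ^ e)
  have hzm : ‖z‖ ^ m ≤ 1 := by nlinarith [pow_nonneg (norm_nonneg z) m]
  have hz : ‖z‖ ≤ 1 := (pow_le_one_iff_of_nonneg (norm_nonneg z) hm).1 hzm
  have hw' : ‖b‖ - 1 ≤ ‖z ^ e + b‖ := by linarith [pow_le_one₀ (norm_nonneg z) hz (n := e)]
  rw [← one_div, le_div_iff₀ (by linarith)]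
  nlinarith [pow_nonneg (norm_nonneg z) m]

theorem inv_le_norm_pow (h : z ^ m * (z ^ e + b) = 1) : (2 * ‖b‖ + 1)⁻¹ ≤ ‖z‖ ^ m := by
  have hn := norm_pow_mul_norm_add_eq_one h
  have hw : ‖z ^ e + b‖ ≤ ‖z‖ ^ e + ‖b‖ := by simpa using norm_add_le (z ^ e) b
  have hpos : 0 < ‖z ^ e + b‖ := by
    by_contra! h0
    simp_all
  rw [eq_inv_of_mul_eq_one_left hn]
  exact inv_anti₀ hpos (by linarith [norm_pow_le_norm_add_one h])

end RootEstimates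

section ExtremalRoots

variable {m e : ℕ} {b : ℤ} {r : ℕ → ℂ}

theorem SortedRoots.norm_pow_le_inv_of_extremalPoly (hm : m ≠ 0) (he : e ≠ 0)
    (hb : 1 < |(b : ℝ)|) (hbe : (2 * |(b : ℝ)| + 1) ^ e ≤ (|(b : ℝ)| - 1) ^ (e + 1))
    (hr : SortedRoots (m + e) ((extremalPoly m e b).map (Int.castRingHom ℂ)) r) {i : ℕ}
    (hei : e ≤ i) (hi : i < m + e) : ‖r i‖ ^ m ≤ (|(b : ℝ)| - 1)⁻¹ := by
  have hroot : ∀ j < m + e, r j ^ m * (r j ^ e + b) = 1 := fun j hj =>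
    eq_one_of_mem_roots_extremalPoly (hr.mem_roots hj)
  suffices ‖r e‖ ^ e ≤ |(b : ℝ)| - 1 by
    rw [← Complex.norm_intCast] at hb this ⊢
    exact norm_pow_le_inv_of_norm_pow_le (hroot i hi) hm hb
      ((pow_le_pow_left₀ (norm_nonneg _) (hr.2 e i hei hi) e).trans this)
  -- Otherwise `e + 1` roots have `‖z‖ ^ e > |b| - 1`, while every root has
  -- `‖z‖ ^ m ≥ (2 |b| + 1)⁻¹`; then the product of all `‖z‖ ^ (e m)`, which is `1`, exceeds `1`.
  by_contra! hlarge
  have hprod : ∏ j ∈ range (m + e), ‖r j‖ = 1 := by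
    rw [hr.prod_norm ((extremalPoly_monic he).map _), coeff_map, extremalPoly_coeff_zero hm]
    simp
  set B := (2 * |(b : ℝ)| + 1) ^ e
  have hB : 1 < B := one_lt_pow₀ (by linarith) he
  have key := pow_mul_pow_le_of_prod_range_eq_one (f := fun j => ‖r j‖ ^ (e * m)) (j := e + 1)
    (P := (|(b : ℝ)| - 1) ^ m) (Q := B⁻¹) (by omega) (by positivity) (by positivity)
    (by rw [prod_pow, hprod, one_pow])
    (fun j (hj : j < e + 1) => by
      rw [pow_mul]
      exact pow_le_pow_left₀ (by linarith) (hlarge.le.trans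
        (pow_le_pow_left₀ (norm_nonneg _) (hr.2 j e (by omega) (by omega)) e)) m)
    (fun j _ (hj : j < m + e) => by
      rw [mul_comm, pow_mul, ← inv_pow, ← Complex.norm_intCast]
      exact pow_le_pow_left₀ (by positivity) (inv_le_norm_pow (hroot j hj)) e)
  rw [← pow_mul, mul_comm m, pow_mul, inv_pow, show m + e - (e + 1) = m - 1 by omega,
    mul_inv_le_iff₀ (by positivity), one_mul] at key
  have := pow_lt_pow_right₀ hB (show m - 1 < m by omega)
  have := pow_le_pow_left₀ (by positivity) hbe m
  linarith

theorem countP_one_le_norm_roots_extremalPoly_le (hm : m ≠ 0) (he : e ≠ 0)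
    (hb : 2 < |(b : ℝ)|) (hbe : (2 * |(b : ℝ)| + 1) ^ e ≤ (|(b : ℝ)| - 1) ^ (e + 1)) :
    ((extremalPoly m e b).map (Int.castRingHom ℂ)).roots.countP (fun z => 1 ≤ ‖z‖) ≤ e := by
  obtain ⟨r, hr⟩ := exists_sortedRoots_extremalPoly (b := b) (m := m) he
  rw [hr.1, Multiset.countP_map, ← Finset.range_val, ← Finset.filter_val, Finset.card_val]
  refine (card_le_card fun i hi => ?_).trans (card_range e).le
  rw [mem_filter, mem_range] at hi
  rw [mem_range]
  by_contra! hei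
  have hsmall := hr.norm_pow_le_inv_of_extremalPoly hm he (by linarith) hbe hei hi.1
  have := inv_lt_one_of_one_lt₀ (show 1 < |(b : ℝ)| - 1 by linarith)
  linarith [one_le_pow₀ hi.2 (n := m)]

end ExtremalRoots

theorem Polynomial.Monic.irreducible_of_countP_roots_lt {p : ℤ[X]} (hp : p.Monic)
    (hdeg : p.natDegree ≠ 0) (P : ℂ → Prop) [DecidablePred P] (N : ℕ)
    (hfac : ∀ q : ℤ[X], q.Monic → q.natDegree ≠ 0 → q ∣ p →
      N ≤ (q.map (Int.castRingHom ℂ)).roots.countP P)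
    (hlt : (p.map (Int.castRingHom ℂ)).roots.countP P < 2 * N) : Irreducible p := by
  refine hp.irreducible_iff_natDegree.2 ⟨fun h => hdeg (by simp [h]), fun f g hf hg hfg => ?_⟩
  by_contra! hfg0
  have hf' := hfac f hf hfg0.1 (hfg ▸ dvd_mul_right f g)
  have hg' := hfac g hg hfg0.2 (hfg ▸ dvd_mul_left g f)
  rw [← hfg, Polynomial.map_mul, roots_mul ((hf.map _).mul (hg.map _)).ne_zero,
    Multiset.countP_add] at hlt
  omega

theorem exists_mem_roots_one_le_norm_of_dvd {p q : ℤ[X]} (hq : q.Monic)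
    (hdeg : q.natDegree ≠ 0) (hqp : q ∣ p) (h0 : p.coeff 0 ≠ 0) :
    ∃ z ∈ (q.map (Int.castRingHom ℂ)).roots, 1 ≤ ‖z‖ := by
  have hq0 : q.coeff 0 ≠ 0 := by
    obtain ⟨s, rfl⟩ := hqp
    exact left_ne_zero_of_mul (mul_coeff_zero q s ▸ h0)
  obtain ⟨r, hr⟩ := exists_sortedRoots (q.map (Int.castRingHom ℂ))
  rw [hq.natDegree_map] at hr
  exact ⟨r 0, hr.mem_roots (by omega), hr.one_le_norm_zero hq hq0 (by omega)⟩

theorem conj_mem_roots_map {q : ℤ[X]} {z : ℂ} (hz : z ∈ (q.map (Int.castRingHom ℂ)).roots) :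
    starRingEnd ℂ z ∈ (q.map (Int.castRingHom ℂ)).roots := by
  rw [mem_roots', IsRoot, eval_map] at hz ⊢
  refine ⟨hz.1, ?_⟩
  have := congrArg (starRingEnd ℂ) hz.2
  rwa [hom_eval₂, map_zero,
    Subsingleton.elim ((starRingEnd ℂ).comp (Int.castRingHom ℂ))] at this

section ExtremalIrreducible

variable {m : ℕ} {b : ℤ}

theorem irreducible_extremalPoly_one (hm : m ≠ 0) (hb : 4 ≤ |(b : ℝ)|) :
    Irreducible (extremalPoly m 1 b) := by
  refine (extremalPoly_monic one_ne_zero).irreducible_of_countP_roots_lt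
    (by rw [extremalPoly_natDegree one_ne_zero]; omega) (fun z => 1 ≤ ‖z‖) 1
    (fun q hq hdeg hqp => ?_) ?_
  · obtain ⟨z, hz, hz1⟩ := exists_mem_roots_one_le_norm_of_dvd hq hdeg hqp
      (by rw [extremalPoly_coeff_zero hm]; decide)
    exact Multiset.countP_pos.2 ⟨z, hz, hz1⟩
  · have := countP_one_le_norm_roots_extremalPoly_le hm one_ne_zero (by linarith)
      (by norm_num; nlinarith)
    omega

theorem im_ne_zero_of_mem_roots_extremalPoly_two (hb : 1 < b) {z : ℂ}
    (hz : z ∈ ((extremalPoly m 2 b).map (Int.castRingHom ℂ)).roots) (hz1 : 1 ≤ ‖z‖) :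
    z.im ≠ 0 := by
  intro him
  have hn := norm_pow_mul_norm_add_eq_one (eq_one_of_mem_roots_extremalPoly hz)
  have hre : (b : ℝ) ≤ (z ^ 2 + b).re := by simp [sq, him]; nlinarith [mul_self_nonneg z.re]
  have hb' : (1 : ℝ) < b := by exact_mod_cast hb
  nlinarith [one_le_pow₀ hz1 (n := m), hre.trans (Complex.re_le_norm _)]

theorem irreducible_extremalPoly_two (hm : m ≠ 0) (hb : 8 ≤ b) :
    Irreducible (extremalPoly m 2 b) := by
  have hb' : (8 : ℝ) ≤ |(b : ℝ)| := by
    rw [abs_of_nonneg (by positivity)]; exact_mod_cast hb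
  have h0 : (extremalPoly m 2 b).coeff 0 ≠ 0 := by rw [extremalPoly_coeff_zero hm]; decide
  refine (extremalPoly_monic two_ne_zero).irreducible_of_countP_roots_lt
    (by rw [extremalPoly_natDegree two_ne_zero]; omega) (fun z => 1 ≤ ‖z‖) 2
    (fun q hq hdeg hqp => ?_) ?_
  -- a root of modulus `≥ 1` is non-real, so each factor also contains its conjugate
  · obtain ⟨z, hz, hz1⟩ := exists_mem_roots_one_le_norm_of_dvd hq hdeg hqp h0
    have him := im_ne_zero_of_mem_roots_extremalPoly_two (by omega) (Multiset.mem_of_le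
      (roots.le_of_dvd ((extremalPoly_monic two_ne_zero).map _).ne_zero
        (Polynomial.map_dvd _ hqp)) hz) hz1
    have hpair : z ::ₘ {starRingEnd ℂ z} ≤ (q.map (Int.castRingHom ℂ)).roots.filter
        (fun z => 1 ≤ ‖z‖) := by
      rw [Multiset.le_iff_subset (by simpa [eq_comm] using mt Complex.conj_eq_iff_im.1 him)]
      exact Multiset.cons_subset.2 ⟨Multiset.mem_filter.2 ⟨hz, hz1⟩,
        Multiset.singleton_subset.2
          (Multiset.mem_filter.2 ⟨conj_mem_roots_map hz, by rwa [Complex.norm_conj]⟩)⟩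
    simpa [Multiset.countP_eq_card_filter] using Multiset.card_le_card hpair
  · have := countP_one_le_norm_roots_extremalPoly_le hm two_ne_zero (by linarith)
      (by norm_num; nlinarith [mul_nonneg (sq_nonneg |(b : ℝ)|) (sub_nonneg.2 hb')])
    omega

end ExtremalIrreducible

open Filter in
theorem le_of_forall_mul_log_le {s t : ℝ} (hs : 0 ≤ s)
    (h : ∀ a : ℕ, 10 ≤ a → t * Real.log (a - 1) ≤ s * Real.log (a + 1)) : t ≤ s := by
  by_contra! hst
  have hlog : Tendsto (fun a : ℕ => Real.log ((a : ℝ) - 1)) atTop atTop :=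
    Real.tendsto_log_atTop.comp <|
      tendsto_atTop_add_const_right _ (-1) tendsto_natCast_atTop_atTop
  obtain ⟨a, ha, hlarge⟩ := ((eventually_ge_atTop 10).and
    (hlog.eventually_gt_atTop (s * Real.log 2 / (t - s)))).exists
  have ha' : (10 : ℝ) ≤ a := by exact_mod_cast ha
  have h2 : Real.log (a + 1) ≤ Real.log 2 + Real.log (a - 1) := by
    rw [← Real.log_mul two_ne_zero (by linarith)]
    exact Real.log_le_log (by linarith) (by linarith)
  rw [div_lt_iff₀ (sub_pos.2 hst)] at hlarge
  nlinarith [h a ha]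

theorem nat_mul_log_le_neg_log {x y : ℝ} {n : ℕ} (hx : 0 < x) (h : x ^ n ≤ y⁻¹) :
    n * Real.log x ≤ -Real.log y := by
  simpa [Real.log_pow, Real.log_inv] using Real.log_le_log (pow_pos hx n) h

section ExtremalLogBounds

variable {m e : ℕ} {b : ℤ} {r : ℕ → ℂ}
  (hr : SortedRoots (m + e) ((extremalPoly m e b).map (Int.castRingHom ℂ)) r)
include hr

theorem SortedRoots.norm_pos_of_extremalPoly (hm : m ≠ 0) (he : e ≠ 0) {i : ℕ}
    (hi : i < m + e) : 0 < ‖r i‖ :=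
  hr.norm_pos (extremalPoly_monic he) (by rw [extremalPoly_coeff_zero hm]; decide) hi

theorem SortedRoots.mul_log_norm_le_of_extremalPoly (hm : m ≠ 0) (he : e ≠ 0) {i : ℕ}
    (hi : i < m + e) : e * Real.log ‖r i‖ ≤ Real.log (|(b : ℝ)| + 1) := by
  rw [← Real.log_pow]
  refine Real.log_le_log (pow_pos (hr.norm_pos_of_extremalPoly hm he hi) e) ?_
  simpa using norm_pow_le_norm_add_one (eq_one_of_mem_roots_extremalPoly (hr.mem_roots hi))

theorem SortedRoots.mul_log_norm_le_neg_log_of_extremalPoly (hm : m ≠ 0) (he : e ≠ 0)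
    (hb : 1 < |(b : ℝ)|) (hbe : (2 * |(b : ℝ)| + 1) ^ e ≤ (|(b : ℝ)| - 1) ^ (e + 1)) {i : ℕ}
    (hei : e ≤ i) (hi : i < m + e) : m * Real.log ‖r i‖ ≤ -Real.log (|(b : ℝ)| - 1) :=
  nat_mul_log_le_neg_log (hr.norm_pos_of_extremalPoly hm he hi)
    (hr.norm_pow_le_inv_of_extremalPoly hm he hb hbe hei hi)

end ExtremalLogBounds

theorem zero_le_log_add_sum_of_mem_Ekd {k d : ℕ} (hd : d ≠ 1) (hkd : k < d) {c : Fin k → ℝ}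
    (hc : c ∈ Ekd k d) {p : ℤ[X]} {r : ℕ → ℂ} (hp : p.Monic) (hirr : Irreducible p)
    (hdeg : p.natDegree = d) (hr : SortedRoots d (p.map (Int.castRingHom ℂ)) r) :
    0 ≤ Real.log ‖r 0‖ + ∑ i, c i * Real.log ‖r (i + 1)‖ := by
  have h0 := hirr.coeff_zero_ne_zero (hdeg ▸ hd)
  exact (one_le_mul_prod_rpow_iff (hr.norm_pos hp h0 (by omega))
    fun i => hr.norm_pos hp h0 (by omega)).1 (hc.2 p r hp hirr hdeg hr)

theorem sum_le_of_mem_Ekd {k d : ℕ} (hd : 2 ≤ d) (hkd : k < d) {c : Fin k → ℝ}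
    (hc : c ∈ Ekd k d) : ∑ i, c i ≤ d - 1 := by
  obtain ⟨m, rfl⟩ : ∃ m, d = m + 1 := ⟨d - 1, by omega⟩
  have hm : m ≠ 0 := by omega
  push_cast
  rw [add_sub_cancel_right]
  refine le_of_forall_mul_log_le m.cast_nonneg fun a ha => ?_
  have hb : |((-a : ℤ) : ℝ)| = a := by simp
  have ha' : (10 : ℝ) ≤ a := by exact_mod_cast ha
  obtain ⟨r, hr⟩ := exists_sortedRoots_extremalPoly (m := m) (b := -a) one_ne_zero
  have hkey := zero_le_log_add_sum_of_mem_Ekd (by omega) hkd hc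
    (extremalPoly_monic one_ne_zero) (irreducible_extremalPoly_one hm (by rw [hb]; linarith))
    (extremalPoly_natDegree one_ne_zero) hr
  have hlarge := hr.mul_log_norm_le_of_extremalPoly hm one_ne_zero (i := 0) (by omega)
  have hsmall (i : Fin k) := hr.mul_log_norm_le_neg_log_of_extremalPoly hm one_ne_zero
    (by linarith) (by norm_num; nlinarith) (i := i + 1) (by omega) (by omega)
  rw [hb] at hlarge hsmall
  calc (∑ i, c i) * Real.log (a - 1) = ∑ i, c i * Real.log (a - 1) := sum_mul ..
    _ ≤ ∑ i, c i * -(m * Real.log ‖r (i + 1)‖) := by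
        gcongr with i
        · exact hc.1 i
        · linarith [hsmall i]
    _ = -(m * ∑ i, c i * Real.log ‖r (i + 1)‖) := by simp [mul_sum, mul_left_comm]
    _ ≤ m * Real.log ‖r 0‖ := by linarith [mul_nonneg m.cast_nonneg hkey]
    _ ≤ m * Real.log (a + 1) :=
        mul_le_mul_of_nonneg_left (by simpa using hlarge) m.cast_nonneg

theorem two_mul_le_of_mem_Ekd_two {d : ℕ} (hd : 3 ≤ d) {c : Fin 2 → ℝ} (hc : c ∈ Ekd 2 d) :
    2 * c 1 ≤ (d - 2) * (c 0 + 1) := by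
  obtain ⟨m, rfl⟩ : ∃ m, d = m + 2 := ⟨d - 2, by omega⟩
  have hm : m ≠ 0 := by omega
  have hc0 := hc.1 0
  have hc1 := hc.1 1
  push_cast
  rw [add_sub_cancel_right]
  refine le_of_forall_mul_log_le (by positivity) fun a ha => ?_
  have hb : |((a : ℤ) : ℝ)| = a := by simp
  have ha' : (10 : ℝ) ≤ a := by exact_mod_cast ha
  obtain ⟨r, hr⟩ := exists_sortedRoots_extremalPoly (m := m) (b := a) two_ne_zero
  have hkey := zero_le_log_add_sum_of_mem_Ekd (by omega) (by omega) hc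
    (extremalPoly_monic two_ne_zero) (irreducible_extremalPoly_two hm (by omega))
    (extremalPoly_natDegree two_ne_zero) hr
  have h0 := hr.mul_log_norm_le_of_extremalPoly hm two_ne_zero (i := 0) (by omega)
  have h1 := hr.mul_log_norm_le_of_extremalPoly hm two_ne_zero (i := 1) (by omega)
  have h2 := hr.mul_log_norm_le_neg_log_of_extremalPoly hm two_ne_zero (by rw [hb]; linarith)
    (by rw [hb]; norm_num; nlinarith [mul_nonneg (sq_nonneg (a : ℝ)) (sub_nonneg.2 ha')])
    (i := 2) le_rfl (by omega)
  rw [hb] at h0 h1 h2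
  simp only [Fin.sum_univ_two, Fin.val_zero, Fin.val_one] at hkey
  push_cast at h0 h1
  nlinarith [mul_le_mul_of_nonneg_left h2 hc1, mul_nonneg m.cast_nonneg hkey,
    mul_le_mul_of_nonneg_left h0 m.cast_nonneg,
    mul_le_mul_of_nonneg_left h1 (mul_nonneg m.cast_nonneg hc0)]

/-- For every integer `d ≥ 2`, `E_{1,d}` is the closed interval
`[0, d-1]`; for every integer `d ≥ 3`, `E_{2,d}` is the convex hull in `ℝ²` of
`(0,0)`, `(d-1, 0)`, `(1, d-2)`, `(0, (d-2)/2)`. -/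
theorem Ekd_low_dimensional :
    (∀ d : ℕ, 2 ≤ d → Ekd 1 d = {c : Fin 1 → ℝ | c 0 ∈ Set.Icc (0 : ℝ) ((d : ℝ) - 1)}) ∧
    (∀ d : ℕ, 3 ≤ d → Ekd 2 d =
      convexHull ℝ ({![0, 0], ![(d : ℝ) - 1, 0], ![1, (d : ℝ) - 2],
        ![0, ((d : ℝ) - 2) / 2]} : Set (Fin 2 → ℝ))) := by
  refine ⟨fun d hd => Set.Subset.antisymm (fun c hc => ⟨hc.1 0, ?_⟩) fun c ⟨hc0, hc1⟩ => ?_,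
    fun d hd => Set.Subset.antisymm (fun c hc => ?_) (convexHull_subset_Ekd_two hd)⟩
  · simpa using sum_le_of_mem_Ekd hd (by omega) hc
  · have hd' : (2 : ℝ) ≤ d := by exact_mod_cast hd
    have hv : ![(d : ℝ) - 1] ∈ Ekd 1 d :=
      mem_Ekd_of_coeff_zero_ne_zero (by omega) (by simpa using by linarith)
        fun p r hp h0 hr => by simpa using hr.one_le_norm_mul_rpow hp h0 hd
    convert ((convex_Ekd hd (by omega)).starConvex (zero_mem_Ekd hd)).smul_mem hv
      (div_nonneg hc0 (by linarith)) (div_le_one_of_le₀ hc1 (by linarith))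
    ext i
    fin_cases i
    simp [div_mul_cancel₀ _ (show (d : ℝ) - 1 ≠ 0 by linarith)]
  · have hd' : (3 : ℝ) ≤ d := by exact_mod_cast hd
    exact mem_convexHull_quadrilateral (by linarith) (hc.1 0) (hc.1 1)
      (by simpa [Fin.sum_univ_two] using sum_le_of_mem_Ekd (by omega) (by omega) hc)
      (two_mul_le_of_mem_Ekd_two hd hc)
end
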